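/- Let (X,S) be a Boshernitzan subshift over a finite alphabet 𝒜 and (X',S') a p-periodic subshift over a finite alphabet 𝒜', and let T = S × S' act on X × X'. Then the following are equivalent: (a) the recoded product subshift Y = {y ∈ (𝒜×𝒜')^ℤ : (π₁(y_n))_{n∈ℤ} ∈ X and (π₂(y_n))_{n∈ℤ} ∈ X'}, with the shift, satisfies the Boshernitzan condition; (b) (X × X', T) is minimal; (c) (X, S^p) is minimal, i.e., the number of S^p-minimal components of X is 1; (d) the only topological eigenvalue of (X,S) among the numbers {e^{2πik/p} : k ∈ ℤ} is the trivial eigenvalue 1. -/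

import Mathlib

open MeasureTheory Filter
open scoped ENNReal

/-- The left shift on bi-infinite sequences: `(S x) n = x (n+1)`. -/
def shiftMap {A : Type*} (x : ℤ → A) : ℤ → A := fun n => x (n + 1)

/-- A subshift: a nonempty, closed, shift-invariant subset of `𝒜^ℤ`. -/
def IsSubshift {A : Type*} [TopologicalSpace A] (X : Set (ℤ → A)) : Prop :=
  X.Nonempty ∧ IsClosed X ∧ shiftMap '' X = X

/-- Minimality of the map `T` on the invariant set `P`:
no proper nonempty closed `T`-invariant subset. -/
def MinimalOn {α : Type*} [TopologicalSpace α] (T : α → α) (P : Set α) : Prop :=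
  ∀ Y ⊆ P, IsClosed Y → T '' Y = Y → Y = ∅ ∨ Y = P

/-- `Y` is a minimal component of the system `(P, T)`. -/
def MinComponent {α : Type*} [TopologicalSpace α] (T : α → α) (P : Set α) (Y : Set α) : Prop :=
  Y ⊆ P ∧ Y.Nonempty ∧ IsClosed Y ∧ T '' Y = Y ∧
    ∀ Z ⊆ Y, Z.Nonempty → IsClosed Z → T '' Z = Z → Z = Y

/-- The number of minimal components of `(P, T)`. -/
noncomputable def numMinComponents {α : Type*} [TopologicalSpace α] (T : α → α) (P : Set α) : ℕ :=
  {Y : Set α | MinComponent T P Y}.ncard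

/-- The cylinder set of a word `u` of length `n` (based at the origin). -/
def cylSet {A : Type*} (n : ℕ) (u : Fin n → A) : Set (ℤ → A) :=
  {x | ∀ i : Fin n, x ((i : ℕ) : ℤ) = u i}

/-- The words of length `n` occurring in elements of `X`. -/
def wordsIn {A : Type*} (X : Set (ℤ → A)) (n : ℕ) : Set (Fin n → A) :=
  {u | ∃ x ∈ X, ∃ m : ℤ, ∀ i : Fin n, x (m + (i : ℕ)) = u i}

/-- `μ̲(n)`: the minimal measure of a cylinder over a legal word of length `n`. -/
noncomputable def muLow {A : Type*} [MeasurableSpace A] (μ : Measure (ℤ → A))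
    (X : Set (ℤ → A)) (n : ℕ) : ℝ≥0∞ :=
  sInf ((fun u => μ (cylSet n u)) '' wordsIn X n)

/-- Boshernitzan subshift: a minimal subshift carrying a shift-invariant Borel
probability measure `μ` with `limsup n·μ̲(n) > 0`. -/
def IsBoshernitzan {A : Type*} [TopologicalSpace A] [MeasurableSpace A]
    (X : Set (ℤ → A)) : Prop :=
  IsSubshift X ∧ MinimalOn shiftMap X ∧
    ∃ μ : Measure (ℤ → A), IsProbabilityMeasure μ ∧ μ X = 1 ∧
      Measure.map shiftMap μ = μ ∧
      0 < Filter.limsup (fun n : ℕ => (n : ℝ≥0∞) * muLow μ X n) Filter.atTop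

/-- The product map `T = S × S'` on pairs of sequences. -/
def prodShift {A A' : Type*} (z : (ℤ → A) × (ℤ → A')) : (ℤ → A) × (ℤ → A') :=
  (shiftMap z.1, shiftMap z.2)

/-- `z` is a topological eigenvalue of the system `(P, T)`: there is a continuous, not
identically vanishing function `f` on `P` with `f ∘ T = z·f` on `P`. -/
def TopEigenvalueOn {α : Type*} [TopologicalSpace α] (T : α → α) (P : Set α) (z : ℂ) : Prop :=
  ∃ f : α → ℂ, ContinuousOn f P ∧ (∃ x ∈ P, f x ≠ 0) ∧ ∀ x ∈ P, f (T x) = z * f x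

/-- The recoded product subshift over the alphabet `𝒜 × 𝒜'`. -/
def prodRecode {A A' : Type*} (X : Set (ℤ → A)) (X' : Set (ℤ → A')) : Set (ℤ → A × A') :=
  {y | (fun n => (y n).1) ∈ X ∧ (fun n => (y n).2) ∈ X'}

section Aux
open Set

def shiftInv {A : Type*} (x : ℤ → A) : ℤ → A := fun n => x (n - 1)

lemma shiftInv_shiftMap {A : Type*} (x : ℤ → A) : shiftInv (shiftMap x) = x := by
  funext n; simp [shiftInv, shiftMap]
lemma shiftMap_shiftInv {A : Type*} (x : ℤ → A) : shiftMap (shiftInv x) = x := by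
  funext n; simp [shiftInv, shiftMap]
lemma continuous_shiftMap {A : Type*} [TopologicalSpace A] :
    Continuous (shiftMap (A := A)) := continuous_pi fun n => continuous_apply _
lemma continuous_shiftInv {A : Type*} [TopologicalSpace A] :
    Continuous (shiftInv (A := A)) := continuous_pi fun n => continuous_apply _
lemma shiftMap_injective {A : Type*} : Function.Injective (shiftMap (A := A)) :=
  Function.LeftInverse.injective shiftInv_shiftMap

lemma shiftMap_iterate_apply {A : Type*} (k : ℕ) (x : ℤ → A) (n : ℤ) :
    (shiftMap^[k] x) n = x (n + k) := by
  induction k generalizing x n with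
  | zero => simp
  | succ k ih =>
      rw [Function.iterate_succ_apply, ih]
      simp only [shiftMap]
      congr 1
      push_cast; ring

lemma image_iterate_eq {A : Type*} {X : Set (ℤ → A)} (h : shiftMap '' X = X) (k : ℕ) :
    shiftMap^[k] '' X = X := by
  induction k with
  | zero => simp
  | succ k ih => rw [Function.iterate_succ', Set.image_comp, ih, h]

lemma image_iterate_add {B : Type*} (f : B → B) (a b : ℕ) (M : Set B) :
    f^[a + b] '' M = f^[a] '' (f^[b] '' M) := by
  rw [Function.iterate_add, Set.image_comp]

/-- transport of minimality along a topological conjugacy -/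
lemma minimalOn_image_of_conj {α β : Type*} [TopologicalSpace α] [TopologicalSpace β]
    (e : α ≃ₜ β) (T : α → α) (T' : β → β) (hcomm : ∀ a, e (T a) = T' (e a))
    (P : Set α) (h : MinimalOn T P) : MinimalOn T' (e '' P) := by
  intro Y hYP hYc hYi
  have hTsymm : ∀ b, T (e.symm b) = e.symm (T' b) := by
    intro b
    have h2 := hcomm (e.symm b)
    rw [e.apply_symm_apply] at h2
    rw [← h2, e.symm_apply_apply]
  have h1 : e.symm '' Y ⊆ P := by
    rintro a ⟨b, hb, hba⟩
    rcases hYP hb with ⟨a', ha', ha''⟩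
    rwa [← hba, ← ha'', e.symm_apply_apply]
  have h2 : IsClosed (e.symm '' Y) := e.symm.isClosedMap _ hYc
  have h3 : T '' (e.symm '' Y) = e.symm '' Y := by
    rw [Set.image_image]
    simp_rw [hTsymm]
    rw [← Set.image_image, hYi]
  have hY : e '' (e.symm '' Y) = Y := by
    rw [Set.image_image]; simp
  rcases h _ h1 h2 h3 with h4 | h4
  · left; rw [← hY, h4, Set.image_empty]
  · right; rw [← hY, h4]

lemma minimalOn_conj_iff {α β : Type*} [TopologicalSpace α] [TopologicalSpace β]
    (e : α ≃ₜ β) (T : α → α) (T' : β → β) (hcomm : ∀ a, e (T a) = T' (e a))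
    (P : Set α) : MinimalOn T P ↔ MinimalOn T' (e '' P) := by
  constructor
  · exact minimalOn_image_of_conj e T T' hcomm P
  · intro h
    have hTsymm : ∀ b, e.symm (T' b) = T (e.symm b) := by
      intro b
      have h2 := hcomm (e.symm b)
      rw [e.apply_symm_apply] at h2
      rw [← h2, e.symm_apply_apply]
    have h3 := minimalOn_image_of_conj e.symm T' T hTsymm (e '' P) h
    have heq : e.symm '' (e '' P) = P := by rw [Set.image_image]; simp
    rwa [heq] at h3

end Aux
section Zorn

lemma image_sInter_chain {α : Type*} [TopologicalSpace α] [T2Space α] [CompactSpace α]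
    {T : α → α} (hT : Continuous T) {c : Set (Set α)}
    (hch : IsChain (· ⊆ ·) c) (hne : c.Nonempty)
    (hZne : ∀ Z ∈ c, Z.Nonempty) (hZcl : ∀ Z ∈ c, IsClosed Z)
    (hZinv : ∀ Z ∈ c, T '' Z = Z) :
    T '' (⋂₀ c) = ⋂₀ c ∧ (⋂₀ c).Nonempty := by
  have hdir : Directed (· ⊇ ·) (fun Z : c => (Z : Set α)) := by
    intro a b
    rcases hch.total a.2 b.2 with h | h
    · exact ⟨a, subset_rfl, h⟩
    · exact ⟨b, h, subset_rfl⟩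
  haveI : Nonempty c := ⟨⟨hne.choose, hne.choose_spec⟩⟩
  have hint : (⋂₀ c).Nonempty := by
    rw [Set.sInter_eq_iInter]
    exact IsCompact.nonempty_iInter_of_directed_nonempty_isCompact_isClosed _ hdir
      (fun Z => hZne Z Z.2) (fun Z => (hZcl Z Z.2).isCompact) (fun Z => hZcl Z Z.2)
  constructor
  · apply Set.Subset.antisymm
    · rintro _ ⟨x, hx, rfl⟩
      intro Z hZ
      rw [← hZinv Z hZ]
      exact ⟨x, Set.mem_sInter.mp hx Z hZ, rfl⟩
    · intro x hx
      -- find a common preimage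
      have h1 : ∀ Z : c, ((Z : Set α) ∩ T ⁻¹' {x}).Nonempty := by
        intro Z
        have : x ∈ T '' (Z : Set α) := by rw [hZinv Z Z.2]; exact Set.mem_sInter.mp hx Z Z.2
        rcases this with ⟨a, ha, hax⟩
        exact ⟨a, ha, by simpa using hax⟩
      have h2 : (⋂ Z : c, ((Z : Set α) ∩ T ⁻¹' {x})).Nonempty := by
        apply IsCompact.nonempty_iInter_of_directed_nonempty_isCompact_isClosed _ _ h1
        · intro Z
          exact ((hZcl Z Z.2).inter (IsClosed.preimage hT isClosed_singleton)).isCompact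
        · intro Z
          exact (hZcl Z Z.2).inter (IsClosed.preimage hT isClosed_singleton)
        · intro a b
          rcases hdir a b with ⟨d, h1', h2'⟩
          exact ⟨d, Set.inter_subset_inter_left _ h1', Set.inter_subset_inter_left _ h2'⟩
      rcases h2 with ⟨a, ha⟩
      simp only [Set.mem_iInter, Set.mem_inter_iff, Set.mem_preimage, Set.mem_singleton_iff] at ha
      refine ⟨a, ?_, (ha ⟨hne.choose, hne.choose_spec⟩).2⟩
      intro Z hZ
      exact (ha ⟨Z, hZ⟩).1
  · exact hint

lemma exists_minComponent {α : Type*} [TopologicalSpace α] [T2Space α] [CompactSpace α]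
    {T : α → α} (hT : Continuous T) {Y : Set α} (hne : Y.Nonempty)
    (hcl : IsClosed Y) (hinv : T '' Y = Y) :
    ∃ M, M ⊆ Y ∧ M.Nonempty ∧ IsClosed M ∧ T '' M = M ∧
      ∀ Z ⊆ M, Z.Nonempty → IsClosed Z → T '' Z = Z → Z = M := by
  set S : Set (Set α) := {Z | Z ⊆ Y ∧ Z.Nonempty ∧ IsClosed Z ∧ T '' Z = Z} with hS
  have hzorn := zorn_superset_nonempty S ?_ Y ⟨subset_rfl, hne, hcl, hinv⟩
  · rcases hzorn with ⟨M, hMY, hMmin⟩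
    obtain ⟨hM1, hM2, hM3, hM4⟩ := hMmin.1
    refine ⟨M, hMY, hM2, hM3, hM4, ?_⟩
    intro Z hZM hZne hZcl hZinv
    exact Set.Subset.antisymm hZM (hMmin.2 ⟨hZM.trans hM1, hZne, hZcl, hZinv⟩ hZM)
  · intro c hcS hch hcne
    have h := image_sInter_chain hT hch hcne (fun Z hZ => (hcS hZ).2.1)
      (fun Z hZ => (hcS hZ).2.2.1) (fun Z hZ => (hcS hZ).2.2.2)
    refine ⟨⋂₀ c, ⟨?_, h.2, isClosed_sInter (fun Z hZ => (hcS hZ).2.2.1), h.1⟩,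
      fun s hs => Set.sInter_subset_of_mem hs⟩
    rcases hcne with ⟨Z, hZ⟩
    exact (Set.sInter_subset_of_mem hZ).trans (hcS hZ).1

end Zorn
section Periodic

variable {A' : Type*} (p : ℕ) (y : ℤ → A')

/-- the `j`-th translate of `y` -/
def ytr (j : ℤ) : ℤ → A' := fun n => y (n + j)

variable {p y}

lemma y_per_mul (hyper : ∀ n : ℤ, y (n + (p : ℤ)) = y n) :
    ∀ (t : ℤ) (n : ℤ), y (n + (p : ℤ) * t) = y n := by
  intro t
  induction t using Int.induction_on with
  | zero => simp
  | succ t ih =>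
      intro n
      have : n + (p : ℤ) * (t + 1) = (n + (p:ℤ) * t) + p := by ring
      rw [this, hyper, ih]
  | pred t ih =>
      intro n
      have : n + (p : ℤ) * (-t - 1) + (p : ℤ) = n + (p:ℤ) * (-t) := by ring
      have h2 := hyper (n + (p : ℤ) * (-t - 1))
      rw [this] at h2
      rw [← ih n, ← h2]

lemma ytr_eq_of_mod (hyper : ∀ n : ℤ, y (n + (p : ℤ)) = y n) {i j : ℤ}
    (h : (p : ℤ) ∣ (j - i)) : ytr y i = ytr y j := by
  rcases h with ⟨t, ht⟩
  funext n
  have : n + j = (n + i) + (p : ℤ) * t := by omega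
  simp only [ytr, this, y_per_mul hyper]

lemma ytr_eq_iff (hp : 0 < p) (hyper : ∀ n : ℤ, y (n + (p : ℤ)) = y n)
    (hleast : ∀ q : ℕ, 0 < q → (∀ n : ℤ, y (n + (q : ℤ)) = y n) → p ≤ q)
    {i j : ℤ} : ytr y i = ytr y j ↔ (p : ℤ) ∣ (j - i) := by
  constructor
  · intro h
    by_contra hnd
    set r : ℤ := (j - i) % p with hr
    have hrpos : 0 < r := by
      have h0 : 0 ≤ r := Int.emod_nonneg _ (by positivity)
      rcases h0.lt_or_eq with h1 | h1
      · exact h1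
      · exact absurd (Int.dvd_of_emod_eq_zero h1.symm) hnd
    have hrlt : r < p := Int.emod_lt_of_pos _ (by exact_mod_cast hp)
    -- y has period r
    have hper_ji : ∀ n : ℤ, y (n + (j - i)) = y n := by
      intro n
      have := congrFun h (n - i)
      simpa only [ytr, sub_add_cancel, sub_add_eq_add_sub, add_sub_assoc] using this.symm
    have hper_r : ∀ n : ℤ, y (n + r) = y n := by
      intro n
      have hd : n + r = n + (j - i) + (p : ℤ) * (-((j - i) / p)) := by
        have := Int.mul_ediv_add_emod (j - i) (p : ℤ)
        rw [hr]; linarith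
      rw [hd, y_per_mul hyper, hper_ji]
    have hle := hleast r.toNat (by omega) (by
      intro n
      have : ((r.toNat : ℤ)) = r := Int.toNat_of_nonneg hrpos.le
      rw [this]; exact hper_r n)
    omega
  · exact ytr_eq_of_mod hyper

lemma shiftMap_ytr (j : ℤ) : shiftMap (ytr y j) = ytr y (j + 1) := by
  funext n; simp only [shiftMap, ytr]; ring_nf

lemma shiftMap_iterate_ytr (k : ℕ) (j : ℤ) : shiftMap^[k] (ytr y j) = ytr y (j + k) := by
  funext n
  rw [shiftMap_iterate_apply]
  simp only [ytr]; ring_nf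

lemma mem_X'_iff {X' : Set (ℤ → A')}
    (hX' : X' = {z | ∃ j : ℤ, ∀ n : ℤ, z n = y (n + j)}) {z : ℤ → A'} :
    z ∈ X' ↔ ∃ j : ℤ, z = ytr y j := by
  rw [hX']
  constructor
  · rintro ⟨j, hj⟩; exact ⟨j, funext hj⟩
  · rintro ⟨j, rfl⟩; exact ⟨j, fun n => rfl⟩

lemma X'_eq_finite (hp : 0 < p) (hyper : ∀ n : ℤ, y (n + (p : ℤ)) = y n)
    {X' : Set (ℤ → A')} (hX' : X' = {z | ∃ j : ℤ, ∀ n : ℤ, z n = y (n + j)}) :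
    X' = (fun k : ℕ => ytr y k) '' (Set.Iio p) := by
  ext z
  rw [mem_X'_iff hX']
  constructor
  · rintro ⟨j, rfl⟩
    refine ⟨(j % p).toNat, ?_, ?_⟩
    · have h1 : j % (p:ℤ) < p := Int.emod_lt_of_pos _ (by exact_mod_cast hp)
      simp only [Set.mem_Iio]; omega
    · apply ytr_eq_of_mod hyper
      have h0 : 0 ≤ j % (p:ℤ) := Int.emod_nonneg _ (by positivity)
      have : ((( j % p).toNat : ℤ)) = j % p := Int.toNat_of_nonneg h0
      rw [this]
      have := Int.mul_ediv_add_emod j (p : ℤ)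
      exact ⟨j / p, by linear_combination -this⟩
  · rintro ⟨k, _, rfl⟩; exact ⟨k, rfl⟩

lemma X'_finite (hp : 0 < p) (hyper : ∀ n : ℤ, y (n + (p : ℤ)) = y n)
    {X' : Set (ℤ → A')} (hX' : X' = {z | ∃ j : ℤ, ∀ n : ℤ, z n = y (n + j)}) :
    X'.Finite := by
  rw [X'_eq_finite hp hyper hX']
  exact (Set.finite_Iio p).image _

lemma isClosed_X' [TopologicalSpace A'] [T2Space A'] (hp : 0 < p)
    (hyper : ∀ n : ℤ, y (n + (p : ℤ)) = y n)
    {X' : Set (ℤ → A')} (hX' : X' = {z | ∃ j : ℤ, ∀ n : ℤ, z n = y (n + j)}) :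
    IsClosed X' :=
  (X'_finite hp hyper hX').isClosed

lemma shiftMap_image_X'
    {X' : Set (ℤ → A')} (hX' : X' = {z | ∃ j : ℤ, ∀ n : ℤ, z n = y (n + j)}) :
    shiftMap '' X' = X' := by
  apply Set.Subset.antisymm
  · rintro _ ⟨z, hz, rfl⟩
    rcases (mem_X'_iff hX').mp hz with ⟨j, rfl⟩
    rw [shiftMap_ytr]
    exact (mem_X'_iff hX').mpr ⟨j + 1, rfl⟩
  · intro z hz
    rcases (mem_X'_iff hX').mp hz with ⟨j, rfl⟩
    exact ⟨ytr y (j - 1), (mem_X'_iff hX').mpr ⟨j - 1, rfl⟩, by rw [shiftMap_ytr, sub_add_cancel]⟩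

end Periodic
section Part2

variable {A A' : Type*} [Fintype A] [TopologicalSpace A] [DiscreteTopology A]
  [Fintype A'] [TopologicalSpace A'] [DiscreteTopology A']
  {X : Set (ℤ → A)} {p : ℕ} {y : ℤ → A'} {X' : Set (ℤ → A')}

lemma prodShift_image_prod (s : Set (ℤ → A)) (t : Set (ℤ → A')) :
    prodShift '' (s ×ˢ t) = (shiftMap '' s) ×ˢ (shiftMap '' t) := by
  ext ⟨u, v⟩
  constructor
  · rintro ⟨⟨a, b⟩, ⟨ha, hb⟩, h⟩
    obtain ⟨h1, h2⟩ := Prod.mk.injEq .. ▸ h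
    exact ⟨⟨a, ha, h1⟩, ⟨b, hb, h2⟩⟩
  · rintro ⟨⟨a, ha, h1⟩, ⟨b, hb, h2⟩⟩
    exact ⟨(a, b), ⟨ha, hb⟩, by simp [prodShift, h1, h2]⟩

lemma part_b_to_c (hp : 0 < p)
    (hyper : ∀ n : ℤ, y (n + (p : ℤ)) = y n)
    (hleast : ∀ q : ℕ, 0 < q → (∀ n : ℤ, y (n + (q : ℤ)) = y n) → p ≤ q)
    (hX' : X' = {z | ∃ j : ℤ, ∀ n : ℤ, z n = y (n + j)})
    (hXs : shiftMap '' X = X) (hXcl : IsClosed X)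
    (hb : MinimalOn prodShift (X ×ˢ X')) : MinimalOn (shiftMap^[p]) X := by
  intro Y hYX hYcl hYinv
  rcases Y.eq_empty_or_nonempty with h | hYne
  · exact Or.inl h
  right
  -- the "tower" set
  set term : ℕ → Set ((ℤ → A) × (ℤ → A')) :=
    fun j => (shiftMap^[j] '' Y) ×ˢ {ytr y (j : ℤ)} with hterm
  have hYp_dvd : ∀ j : ℕ, p ∣ j → shiftMap^[j] '' Y = Y := by
    intro j hj
    induction j using Nat.strong_induction_on with
    | _ j ih =>
      rcases Nat.eq_zero_or_pos j with rfl | hj0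
      · simp
      · have hpj : p ≤ j := Nat.le_of_dvd hj0 hj
        have h1 : j = (j - p) + p := by omega
        rw [h1, image_iterate_add, hYinv]
        exact ih (j - p) (by omega) ((Nat.dvd_sub hj dvd_rfl))
  have hterm_per : ∀ j : ℕ, term (j + p) = term j := by
    intro j
    have h1 : shiftMap^[j + p] '' Y = shiftMap^[j] '' Y := by
      rw [image_iterate_add, hYinv]
    have h2 : ytr y ((j : ℤ) + p) = ytr y j := by
      apply ytr_eq_of_mod hyper; exact ⟨-1, by push_cast; ring⟩
    simp only [hterm]
    rw [h1]; push_cast; rw [h2]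
  have hterm_mul : ∀ (t r : ℕ), term (r + p * t) = term r := by
    intro t
    induction t with
    | zero => simp
    | succ t ih =>
        intro r
        have h1 : r + p * (t + 1) = (r + p * t) + p := by ring
        rw [h1, hterm_per, ih]
  have hterm_mod : ∀ j : ℕ, term j = term (j % p) := by
    intro j
    conv_lhs => rw [← Nat.mod_add_div j p]
    exact hterm_mul _ _
  set Z : Set ((ℤ → A) × (ℤ → A')) := ⋃ j : ℕ, term j with hZ
  have hZfin : Z = ⋃ j ∈ Finset.range p, term j := by
    apply Set.Subset.antisymm
    · apply Set.iUnion_subset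
      intro j
      rw [hterm_mod j]
      exact Set.subset_biUnion_of_mem (Finset.mem_coe.mpr
        (Finset.mem_range.mpr (Nat.mod_lt _ hp)))
    · exact Set.iUnion₂_subset fun j _ => Set.subset_iUnion _ j
  have hZsub : Z ⊆ X ×ˢ X' := by
    apply Set.iUnion_subset
    intro j
    apply Set.prod_mono
    · rw [← image_iterate_eq hXs j]
      exact Set.image_mono hYX
    · intro z hz
      rw [Set.mem_singleton_iff] at hz
      subst hz
      exact (mem_X'_iff hX').mpr ⟨j, rfl⟩
  have hZcl : IsClosed Z := by
    rw [hZfin]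
    apply Set.Finite.isClosed_biUnion (Finset.finite_toSet _)
    intro j _
    apply IsClosed.prod
    · exact (((hYcl.isCompact).image (continuous_shiftMap.iterate j)).isClosed)
    · exact isClosed_singleton
  have hZinv : prodShift '' Z = Z := by
    have h1 : ∀ j : ℕ, prodShift '' term j = term (j + 1) := by
      intro j
      rw [hterm]
      simp only
      rw [prodShift_image_prod, Set.image_singleton, shiftMap_ytr,
        ← Set.image_comp, ← Function.iterate_succ']
      push_cast
      rfl
    rw [hZ, Set.image_iUnion]
    simp_rw [h1]
    apply Set.Subset.antisymm
    · exact Set.iUnion_subset fun j => Set.subset_iUnion term (j + 1)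
    · apply Set.iUnion_subset
      intro j
      rcases Nat.eq_zero_or_pos j with rfl | hj
      · have htp : term 0 = term ((p - 1) + 1) := by
          rw [show (p - 1) + 1 = p from by omega]
          simpa using (hterm_per 0).symm
        rw [htp]
        exact Set.subset_iUnion (fun j => term (j + 1)) (p - 1)
      · have htj : term j = term ((j - 1) + 1) := by
          rw [show (j - 1) + 1 = j from by omega]
        rw [htj]
        exact Set.subset_iUnion (fun j => term (j + 1)) (j - 1)
  have hZne : Z.Nonempty := by
    rcases hYne with ⟨x, hx⟩
    refine ⟨(x, ytr y 0), Set.mem_iUnion.mpr ⟨0, ⟨?_, rfl⟩⟩⟩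
    simpa using hx
  rcases hb Z hZsub hZcl hZinv with h | h
  · exact absurd (h ▸ hZne) (by simp)
  -- now every x ∈ X gives (x, ytr 0) ∈ Z
  apply Set.Subset.antisymm hYX
  intro x hx
  have hmem : (x, ytr y 0) ∈ Z := by
    rw [h]
    exact ⟨hx, (mem_X'_iff hX').mpr ⟨0, rfl⟩⟩
  rcases Set.mem_iUnion.mp hmem with ⟨j, hj⟩
  obtain ⟨hj1, hj2⟩ := hj
  simp only [Set.mem_singleton_iff] at hj2
  have hdvd : (p : ℤ) ∣ ((j : ℤ) - 0) := (ytr_eq_iff hp hyper hleast).mp hj2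
  have hpj : p ∣ j := by
    rw [sub_zero] at hdvd
    exact_mod_cast hdvd
  rw [← hYp_dvd j hpj]
  exact hj1

lemma part_c_to_b (hp : 0 < p)
    (hyper : ∀ n : ℤ, y (n + (p : ℤ)) = y n)
    (hX' : X' = {z | ∃ j : ℤ, ∀ n : ℤ, z n = y (n + j)})
    (hc : MinimalOn (shiftMap^[p]) X) : MinimalOn prodShift (X ×ˢ X') := by
  intro W hW hWcl hWinv
  rcases W.eq_empty_or_nonempty with h | hWne
  · exact Or.inl h
  right
  set C : ℤ → Set (ℤ → A) := fun j => {x | (x, ytr y j) ∈ W} with hC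
  have hCcl : ∀ j, IsClosed (C j) := by
    intro j
    exact hWcl.preimage (Continuous.prodMk_left _)
  have hCX : ∀ j, C j ⊆ X := fun j x hx => (hW hx).1
  have hCsucc : ∀ j, shiftMap '' C j = C (j + 1) := by
    intro j
    apply Set.Subset.antisymm
    · rintro _ ⟨x, hx, rfl⟩
      have : prodShift (x, ytr y j) ∈ W := by
        rw [← hWinv]; exact ⟨_, hx, rfl⟩
      simpa [hC, prodShift, shiftMap_ytr] using this
    · intro v hv
      have hv' : (v, ytr y (j + 1)) ∈ prodShift '' W := by rw [hWinv]; exact hv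
      rcases hv' with ⟨⟨a, b⟩, hab, heq⟩
      have h1 : shiftMap a = v := congrArg Prod.fst heq
      have h2 : shiftMap b = ytr y (j + 1) := congrArg Prod.snd heq
      have hb' : b = ytr y j := by
        apply shiftMap_injective
        rw [h2, shiftMap_ytr]
      exact ⟨a, by rw [hC]; simpa [← hb'] using hab, h1⟩
  have hCiter : ∀ (k : ℕ) (j : ℤ), shiftMap^[k] '' C j = C (j + k) := by
    intro k
    induction k with
    | zero => simp
    | succ k ih =>
        intro j
        rw [Function.iterate_succ', Set.image_comp, ih, hCsucc]
        congr 1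
        push_cast; ring
  have hCper : ∀ j, C (j + (p:ℤ)) = C j := by
    intro j
    have : ytr y (j + (p : ℤ)) = ytr y j := by
      apply ytr_eq_of_mod hyper; exact ⟨-1, by push_cast; ring⟩
    rw [hC]; simp only [this]
  have hCinv : ∀ j, shiftMap^[p] '' C j = C j := by
    intro j; rw [hCiter, hCper]
  -- some section is nonempty
  rcases hWne with ⟨⟨a, b⟩, hab⟩
  have hbX' : b ∈ X' := (hW hab).2
  rcases (mem_X'_iff hX').mp hbX' with ⟨j0, rfl⟩
  have hCj0 : (C j0).Nonempty := ⟨a, hab⟩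
  have hCne : ∀ j : ℤ, (C j).Nonempty := by
    intro j
    set k : ℤ := (j - j0) % p with hk
    have hk0 : 0 ≤ k := Int.emod_nonneg _ (by positivity)
    have hCeq : C j = C (j0 + k.toNat) := by
      have : ytr y j = ytr y (j0 + k.toNat) := by
        apply ytr_eq_of_mod hyper
        have h1 : ((k.toNat : ℤ)) = k := Int.toNat_of_nonneg hk0
        have h2 := Int.mul_ediv_add_emod (j - j0) (p : ℤ)
        exact ⟨-((j - j0)/p), by rw [h1, hk, mul_neg]; linarith⟩
      rw [hC]; simp only [this]
    rw [hCeq, ← hCiter]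
    exact hCj0.image _
  have hCX' : ∀ j, C j = X := by
    intro j
    rcases hc (C j) (hCX j) (hCcl j) (hCinv j) with h | h
    · exact absurd (h ▸ hCne j) (by simp)
    · exact h
  apply Set.Subset.antisymm hW
  rintro ⟨x, z⟩ ⟨hx, hz⟩
  rcases (mem_X'_iff hX').mp hz with ⟨j, rfl⟩
  have : x ∈ C j := by rw [hCX']; exact hx
  exact this

end Part2
section Part3

variable {A : Type*} [Fintype A] [TopologicalSpace A] [DiscreteTopology A]
  {X : Set (ℤ → A)} {p : ℕ}

lemma mem_of_image_eq {α : Type*} {f : α → α} {X : Set α} (h : f '' X = X)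
    {x : α} (hx : x ∈ X) : f x ∈ X := by
  rw [← h]; exact ⟨x, hx, rfl⟩

lemma iterate_mem {α : Type*} {f : α → α} {X : Set α} (h : f '' X = X)
    {x : α} (hx : x ∈ X) (k : ℕ) : f^[k] x ∈ X := by
  induction k with
  | zero => simpa
  | succ k ih => rw [Function.iterate_succ_apply']; exact mem_of_image_eq h ih

lemma eigen_iterate {f : (ℤ → A) → ℂ} {z : ℂ}
    (hXs : shiftMap '' X = X)
    (heig : ∀ x ∈ X, f (shiftMap x) = z * f x) :
    ∀ (k : ℕ), ∀ x ∈ X, f (shiftMap^[k] x) = z ^ k * f x := by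
  intro k
  induction k with
  | zero => intro x hx; simp
  | succ k ih =>
      intro x hx
      rw [Function.iterate_succ_apply', heig _ (iterate_mem hXs hx k), ih x hx,
        pow_succ]
      ring

lemma part_c_to_d (hp : 0 < p)
    (hXs : shiftMap '' X = X) (hXcl : IsClosed X)
    (hc : MinimalOn (shiftMap^[p]) X) :
    ∀ k : ℤ, TopEigenvalueOn shiftMap X (Complex.exp (2 * Real.pi * Complex.I * k / p)) →
      Complex.exp (2 * Real.pi * Complex.I * k / p) = 1 := by
  intro k ⟨f, hfc, ⟨x₀, hx₀X, hx₀⟩, heig⟩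
  set z : ℂ := Complex.exp (2 * Real.pi * Complex.I * k / p) with hz
  have hp0 : (p : ℂ) ≠ 0 := Nat.cast_ne_zero.mpr hp.ne'
  have hzp : z ^ p = 1 := by
    rw [hz, ← Complex.exp_nat_mul]
    have h1 : (p : ℂ) * (2 * Real.pi * Complex.I * k / p) = k * (2 * Real.pi * Complex.I) := by
      field_simp
    rw [h1]
    exact Complex.exp_int_mul_two_pi_mul_I k
  have hXp : shiftMap^[p] '' X = X := image_iterate_eq hXs p
  set Y : Set (ℤ → A) := X ∩ f ⁻¹' {f x₀} with hY
  have hYcl : IsClosed Y := hfc.preimage_isClosed_of_isClosed hXcl isClosed_singleton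
  have hYinv : shiftMap^[p] '' Y = Y := by
    apply Set.Subset.antisymm
    · rintro _ ⟨x, ⟨hxX, hxf⟩, rfl⟩
      refine ⟨iterate_mem hXs hxX p, ?_⟩
      simp only [Set.mem_preimage, Set.mem_singleton_iff] at hxf ⊢
      rw [eigen_iterate hXs heig p x hxX, hzp, one_mul, hxf]
    · rintro x ⟨hxX, hxf⟩
      have : x ∈ shiftMap^[p] '' X := by rw [hXp]; exact hxX
      rcases this with ⟨w, hwX, rfl⟩
      refine ⟨w, ⟨hwX, ?_⟩, rfl⟩
      simp only [Set.mem_preimage, Set.mem_singleton_iff] at hxf ⊢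
      rw [eigen_iterate hXs heig p w hwX, hzp, one_mul] at hxf
      exact hxf
  rcases hc Y Set.inter_subset_left hYcl hYinv with h | h
  · exact absurd (h ▸ (⟨x₀, hx₀X, rfl⟩ : Y.Nonempty)) (by simp)
  · -- f is constant = f x₀ on X; apply at shiftMap x₀
    have hSx₀ : shiftMap x₀ ∈ Y := by rw [h]; exact mem_of_image_eq hXs hx₀X
    have h1 : f (shiftMap x₀) = f x₀ := hSx₀.2
    rw [heig x₀ hx₀X] at h1
    exact mul_right_cancel₀ hx₀ (by rw [h1, one_mul])

lemma commute_image {α : Type*} {F T : α → α} (hcomm : ∀ x, F (T x) = T (F x))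
    (M : Set α) : F '' (T '' M) = T '' (F '' M) := by
  rw [Set.image_image, Set.image_image]
  simp_rw [hcomm]

/-- transport of the minimal-component property along a commuting invertible map -/
lemma transport_min {α : Type*} [TopologicalSpace α] [T2Space α] [CompactSpace α]
    {F G T : α → α} (hF : Continuous F) (hG : Continuous G)
    (hGF : ∀ x, G (F x) = x) (hFG : ∀ x, F (G x) = x)
    (hcomm : ∀ x, F (T x) = T (F x)) {M : Set α}
    (hmin : ∀ Z ⊆ M, Z.Nonempty → IsClosed Z → T '' Z = Z → Z = M) :
    ∀ Z ⊆ F '' M, Z.Nonempty → IsClosed Z → T '' Z = Z → Z = F '' M := by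
  have hFinj : Function.Injective F := Function.LeftInverse.injective hGF
  have hcommG : ∀ x, G (T x) = T (G x) := by
    intro x
    apply hFinj
    rw [hFG, hcomm, hFG]
  intro Z hZM hZne hZcl hZinv
  have hGFim : ∀ (s : Set α), F '' (G '' s) = s := by
    intro s; rw [Set.image_image]; simp only [hFG, Set.image_id']
  have hFGim : ∀ (s : Set α), G '' (F '' s) = s := by
    intro s; rw [Set.image_image]; simp only [hGF, Set.image_id']
  have h1 : G '' Z ⊆ M := by
    rw [← hFGim M]; exact Set.image_mono hZM
  have h2 : (G '' Z).Nonempty := hZne.image _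
  have h3 : IsClosed (G '' Z) := (hZcl.isCompact.image hG).isClosed
  have h4 : T '' (G '' Z) = G '' Z := by rw [← commute_image hcommG, hZinv]
  have h5 := hmin _ h1 h2 h3 h4
  rw [← hGFim Z, h5]

lemma part_d_to_c (hp : 0 < p)
    (hXs : shiftMap '' X = X) (hXcl : IsClosed X) (hXne : X.Nonempty)
    (hXmin : MinimalOn shiftMap X)
    (hd : ∀ k : ℤ, TopEigenvalueOn shiftMap X (Complex.exp (2 * Real.pi * Complex.I * k / p)) →
      Complex.exp (2 * Real.pi * Complex.I * k / p) = 1) :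
    MinimalOn (shiftMap^[p]) X := by
  intro Y hYX hYcl hYinv
  rcases Y.eq_empty_or_nonempty with h | hYne
  · exact Or.inl h
  by_contra hcon
  push_neg at hcon
  have hYneqX : Y ≠ X := hcon.2
  -- get a minimal component M ⊆ Y for shiftMap^[p]
  obtain ⟨M, hMY, hMne, hMcl, hMinv, hMmin⟩ :=
    exists_minComponent (continuous_shiftMap.iterate p) hYne hYcl hYinv
  have hMX : M ⊆ X := hMY.trans hYX
  have hMneqX : M ≠ X := fun h => hYneqX (Set.Subset.antisymm hYX (h ▸ hMY))
  -- d := least period of M under shiftMap-image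
  have hQp : 0 < p ∧ shiftMap^[p] '' M = M := ⟨hp, hMinv⟩
  classical
  set Q : ℕ → Prop := fun j => 0 < j ∧ shiftMap^[j] '' M = M with hQ
  have hex : ∃ j, Q j := ⟨p, hQp⟩
  set d : ℕ := Nat.find hex with hdd
  obtain ⟨hd0, hdM⟩ : Q d := Nat.find_spec hex
  have hdmin : ∀ j, j < d → ¬ Q j := fun j hj => Nat.find_min hex (hdd ▸ hj)
  have hdp : d ≤ p := Nat.find_min' hex hQp
  clear hdd
  clear_value d
  -- multiples of d fix M
  have hdmul : ∀ t : ℕ, shiftMap^[d * t] '' M = M := by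
    intro t
    induction t with
    | zero => simp
    | succ t ih =>
        have h1 : d * (t + 1) = d + d * t := by ring
        rw [h1, image_iterate_add, ih, hdM]
  -- d divides p
  have hddvd : d ∣ p := by
    by_contra hnd
    have hr0 : 0 < p % d := Nat.pos_of_ne_zero fun h => hnd (Nat.dvd_of_mod_eq_zero h)
    have hrd : p % d < d := Nat.mod_lt _ hd0
    apply hdmin _ hrd
    refine ⟨hr0, ?_⟩
    have h1 : p = p % d + d * (p / d) := (Nat.mod_add_div p d).symm
    have h2 : shiftMap^[p % d] '' M = shiftMap^[p] '' M := by
      conv_lhs => rw [← hdmul (p / d)]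
      rw [← image_iterate_add, ← h1]
    rw [h2, hMinv]
  -- d > 1
  have hd1 : 1 < d := by
    by_contra hcon1
    have hdeq : d = 1 := by omega
    rw [hdeq] at hdM
    apply hMneqX
    rcases hXmin M hMX hMcl (by simpa using hdM) with h' | h'
    · exact absurd (h' ▸ hMne) (by simp)
    · exact h'
  -- the translates
  set Mj : ℕ → Set (ℤ → A) := fun j => shiftMap^[j] '' M with hMj
  have hMjcl : ∀ j, IsClosed (Mj j) :=
    fun j => (hMcl.isCompact.image (continuous_shiftMap.iterate j)).isClosed
  have hMjX : ∀ j, Mj j ⊆ X := by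
    intro j
    rw [hMj]
    simp only
    rw [← image_iterate_eq hXs j]
    exact Set.image_mono hMX
  have hshiftinv_iter : ∀ (j : ℕ) (x : ℤ → A), shiftInv^[j] (shiftMap^[j] x) = x := by
    intro j
    induction j with
    | zero => intro x; simp
    | succ j ih =>
        intro x
        rw [Function.iterate_succ_apply, Function.iterate_succ_apply',
          shiftInv_shiftMap, ih]
  have hshift_iter_inv : ∀ (j : ℕ) (x : ℤ → A), shiftMap^[j] (shiftInv^[j] x) = x := by
    intro j
    induction j with
    | zero => intro x; simp
    | succ j ih =>
        intro x
        rw [Function.iterate_succ_apply, Function.iterate_succ_apply',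
          shiftMap_shiftInv, ih]
  have hMjmin : ∀ j, ∀ Z ⊆ Mj j, Z.Nonempty → IsClosed Z → shiftMap^[p] '' Z = Z → Z = Mj j := by
    intro j
    apply transport_min (continuous_shiftMap.iterate j) (continuous_shiftInv.iterate j)
      (hshiftinv_iter j) (hshift_iter_inv j) ?_ hMmin
    intro x
    rw [← Function.iterate_add_apply, ← Function.iterate_add_apply, Nat.add_comm]
  have hMjinv : ∀ j, shiftMap^[p] '' Mj j = Mj j := by
    intro j
    rw [hMj]
    simp only
    rw [← image_iterate_add, Nat.add_comm, image_iterate_add, hMinv]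
  -- translates with indices differing by < d are disjoint or derive contradiction
  have hMj_eq : ∀ i j : ℕ, i ≤ j → Mj i = Mj j → shiftMap^[j - i] '' M = M := by
    intro i j hij heq
    have h1 : shiftMap^[i] '' (shiftMap^[j - i] '' M) = shiftMap^[i] '' M := by
      rw [← image_iterate_add]
      rw [show i + (j - i) = j from by omega]
      exact heq.symm
    have h2 := congrArg (fun s => shiftInv^[i] '' s) h1
    simp only [Set.image_image, hshiftinv_iter i, Set.image_id'] at h2
    exact h2
  have hMjdisj : ∀ i j : ℕ, i < j → j < d → Mj i ∩ Mj j = ∅ := by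
    intro i j hij hjd
    by_contra hne
    have hne' : (Mj i ∩ Mj j).Nonempty := Set.nonempty_iff_ne_empty.mpr hne
    -- the intersection is invariant
    have hiinv : shiftMap^[p] '' (Mj i ∩ Mj j) = Mj i ∩ Mj j := by
      apply Set.Subset.antisymm
      · rintro _ ⟨x, ⟨h1, h2⟩, rfl⟩
        constructor
        · rw [← hMjinv i]; exact ⟨x, h1, rfl⟩
        · rw [← hMjinv j]; exact ⟨x, h2, rfl⟩
      · rintro x ⟨h1, h2⟩
        have h1' : x ∈ shiftMap^[p] '' Mj i := by rw [hMjinv]; exact h1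
        have h2' : x ∈ shiftMap^[p] '' Mj j := by rw [hMjinv]; exact h2
        rcases h1' with ⟨a, ha, rfl⟩
        rcases h2' with ⟨b, hb, hba⟩
        have : b = a := by
          apply Function.Injective.iterate shiftMap_injective p
          exact hba
        subst this
        exact ⟨b, ⟨ha, hb⟩, rfl⟩
    have hicl : IsClosed (Mj i ∩ Mj j) := (hMjcl i).inter (hMjcl j)
    have hieq1 := hMjmin i _ Set.inter_subset_left hne' hicl hiinv
    have hieq2 := hMjmin j _ Set.inter_subset_right hne' hicl hiinv
    have heq : Mj i = Mj j := by rw [← hieq1, hieq2]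
    have h3 := hMj_eq i j hij.le heq
    exact hdmin (j - i) (by omega) ⟨by omega, h3⟩
  -- union of translates is X
  have hMjper : ∀ j, Mj (j + d) = Mj j := by
    intro j
    rw [hMj]
    simp only
    rw [image_iterate_add, hdM]
  have hMjmod : ∀ j, Mj j = Mj (j % d) := by
    intro j
    conv_lhs => rw [← Nat.mod_add_div j d]
    set t : ℕ := j / d
    clear_value t
    induction t with
    | zero => simp
    | succ t ih =>
        rw [show j % d + d * (t+1) = (j % d + d * t) + d from by ring, hMjper, ih]
  set U : Set (ℤ → A) := ⋃ j ∈ Finset.range d, Mj j with hU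
  have hUcl : IsClosed U := by
    apply Set.Finite.isClosed_biUnion (Finset.finite_toSet _)
    exact fun j _ => hMjcl j
  have hUX : U ⊆ X := Set.iUnion₂_subset fun j _ => hMjX j
  have hUinv : shiftMap '' U = U := by
    have h1 : ∀ j : ℕ, shiftMap '' Mj j = Mj (j + 1) := by
      intro j
      rw [hMj]
      simp only
      rw [← Set.image_comp, ← Function.iterate_succ']
    apply Set.Subset.antisymm
    · rw [hU, Set.image_iUnion₂]
      apply Set.iUnion₂_subset
      intro j hj
      rw [h1 j, hMjmod (j+1)]
      apply Set.subset_biUnion_of_mem (u := Mj)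
      exact Finset.mem_coe.mpr (Finset.mem_range.mpr (Nat.mod_lt _ (by omega)))
    · intro x hx
      rcases Set.mem_iUnion₂.mp hx with ⟨j, hj, hxj⟩
      have hjlt : j < d := Finset.mem_range.mp hj
      rcases Nat.eq_zero_or_pos j with rfl | hj0
      · -- x ∈ Mj 0 = Mj d = shiftMap '' Mj (d-1)
        have h2 : Mj 0 = Mj ((d - 1) + 1) := by
          rw [show (d-1)+1 = d from by omega]
          simpa using (hMjper 0).symm
        rw [h2, ← h1] at hxj
        rcases hxj with ⟨a, ha, rfl⟩
        have haU : a ∈ U := by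
          rw [hU]
          exact Set.mem_biUnion (Finset.mem_range.mpr (show d - 1 < d by omega)) ha
        exact Set.mem_image_of_mem _ haU
      · have h2 : Mj j = Mj ((j - 1) + 1) := by rw [show (j-1)+1 = j from by omega]
        rw [h2, ← h1] at hxj
        rcases hxj with ⟨a, ha, rfl⟩
        have haU : a ∈ U := by
          rw [hU]
          exact Set.mem_biUnion (Finset.mem_range.mpr (show j - 1 < d by omega)) ha
        exact Set.mem_image_of_mem _ haU
  have hUne : U.Nonempty := by
    rcases hMne with ⟨x, hx⟩
    have hx0 : x ∈ Mj 0 := by rw [hMj]; simpa using hx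
    exact ⟨x, Set.mem_biUnion (Finset.mem_range.mpr (show (0:ℕ) < d by omega)) hx0⟩
  have hUX' : U = X := by
    rcases hXmin U hUX hUcl hUinv with h | h
    · exact absurd (h ▸ hUne) (by simp)
    · exact h
  -- build the eigenfunction
  set e : ℕ → ℂ := fun j => Complex.exp (2 * Real.pi * Complex.I * j / d) with he
  set f : (ℤ → A) → ℂ :=
    fun x => ∑ j ∈ Finset.range d, e j * Set.indicator (Mj j) (fun _ => (1:ℂ)) x with hf
  have hd0' : (d : ℂ) ≠ 0 := Nat.cast_ne_zero.mpr hd0.ne'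
  have hfval : ∀ j < d, ∀ x ∈ Mj j, f x = e j := by
    intro j hj x hx
    rw [hf]
    simp only
    rw [Finset.sum_eq_single j]
    · rw [Set.indicator_of_mem hx, mul_one]
    · intro l hl hlj
      have hnm : x ∉ Mj l := by
        intro hxl
        rcases Nat.lt_or_ge l j with h | h
        · have hdis := hMjdisj l j h hj
          have hmem : x ∈ Mj l ∩ Mj j := ⟨hxl, hx⟩
          rw [hdis] at hmem
          simpa using hmem
        · have hdis := hMjdisj j l (by omega) (Finset.mem_range.mp hl)
          have hmem : x ∈ Mj j ∩ Mj l := ⟨hx, hxl⟩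
          rw [hdis] at hmem
          simpa using hmem
      rw [Set.indicator_of_notMem hnm, mul_zero]
    · intro h
      exact absurd (Finset.mem_range.mpr hj) (by simpa using h)
  have hmemMj : ∀ x ∈ X, ∃ j, j < d ∧ x ∈ Mj j := by
    intro x hx
    rw [← hUX'] at hx
    rcases Set.mem_iUnion₂.mp hx with ⟨j, hj, hxj⟩
    exact ⟨j, Finset.mem_range.mp hj, hxj⟩
  have hMjsucc : ∀ j : ℕ, shiftMap '' Mj j = Mj (j + 1) := by
    intro j
    rw [hMj]
    simp only
    rw [← Set.image_comp, ← Function.iterate_succ']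
  -- continuity
  have hfc : ContinuousOn f X := by
    intro x hx
    rcases hmemMj x hx with ⟨j, hj, hxj⟩
    set V : Set (ℤ → A) := (⋃ l ∈ (Finset.range d).erase j, Mj l)ᶜ with hV
    have hVopen : IsOpen V := (Set.Finite.isClosed_biUnion (Finset.finite_toSet _)
      (fun l _ => hMjcl l)).isOpen_compl
    have hxV : x ∈ V := by
      rw [hV]
      simp only [Set.mem_compl_iff]
      intro hxl
      rcases Set.mem_iUnion₂.mp hxl with ⟨l, hl, hxl'⟩
      have hlj : l ≠ j := (Finset.mem_erase.mp hl).1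
      have hld : l < d := Finset.mem_range.mp (Finset.mem_erase.mp hl).2
      rcases Nat.lt_or_ge l j with h | h
      · have hdis := hMjdisj l j h hj
        have hm : x ∈ Mj l ∩ Mj j := ⟨hxl', hxj⟩
        rw [hdis] at hm
        simpa using hm
      · have hdis := hMjdisj j l (by omega) hld
        have hm : x ∈ Mj j ∩ Mj l := ⟨hxj, hxl'⟩
        rw [hdis] at hm
        simpa using hm
    have hev : f =ᶠ[nhdsWithin x X] (fun _ => e j) := by
      filter_upwards [mem_nhdsWithin_of_mem_nhds (hVopen.mem_nhds hxV),
        self_mem_nhdsWithin] with z hzV hzX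
      rcases hmemMj z hzX with ⟨l, hl, hzl⟩
      have hlj : l = j := by
        by_contra hne
        exact hzV (Set.mem_biUnion (Finset.mem_erase.mpr ⟨hne, Finset.mem_range.mpr hl⟩) hzl)
      subst hlj
      exact hfval l hl z hzl
    exact (continuousWithinAt_const).congr_of_eventuallyEq hev (hfval j hj x hxj)
  -- the eigenvalue equation
  set z0 : ℂ := Complex.exp (2 * Real.pi * Complex.I / d) with hz0
  have heig : ∀ x ∈ X, f (shiftMap x) = z0 * f x := by
    intro x hx
    rcases hmemMj x hx with ⟨j, hj, hxj⟩
    have hSx : shiftMap x ∈ Mj (j + 1) := by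
      rw [← hMjsucc]
      exact ⟨x, hxj, rfl⟩
    rcases Nat.lt_or_ge (j + 1) d with h | h
    · rw [hfval (j + 1) h _ hSx, hfval j hj x hxj, hz0, he]
      simp only
      rw [← Complex.exp_add]
      congr 1
      push_cast
      field_simp
      ring
    · have hjd : j + 1 = d := by omega
      have hSx0 : shiftMap x ∈ Mj 0 := by
        have h0 : Mj (j + 1) = Mj 0 := by
          rw [hjd]
          simpa using hMjper 0
        rwa [h0] at hSx
      rw [hfval 0 (by omega) _ hSx0, hfval j hj x hxj, hz0, he]
      simp only
      rw [← Complex.exp_add]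
      have hjc : (j : ℂ) = (d : ℂ) - 1 := by
        have h5 : ((j : ℂ) + 1) = (d : ℂ) := by exact_mod_cast hjd
        linear_combination h5
      have harg : 2 * (Real.pi : ℂ) * Complex.I / d + 2 * Real.pi * Complex.I * j / d
          = 2 * Real.pi * Complex.I := by
        rw [hjc]
        field_simp
        ring
      rw [harg, Complex.exp_two_pi_mul_I]
      simp
  -- nonvanishing
  obtain ⟨x₀, hx₀M⟩ := hMne
  have hMj0 : Mj 0 = M := by rw [hMj]; simp
  have hx₀Mj0 : x₀ ∈ Mj 0 := by rwa [hMj0]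
  have hx₀X : x₀ ∈ X := hMX hx₀M
  have hfx₀ : f x₀ = 1 := by
    rw [hfval 0 (by omega) x₀ hx₀Mj0, he]
    simp
  -- conclude via the eigenvalue hypothesis
  set k : ℕ := p / d with hk
  have hpdk : k * d = p := Nat.div_mul_cancel hddvd
  have hk0 : 0 < k := Nat.div_pos hdp hd0
  have hkc : (k : ℂ) ≠ 0 := Nat.cast_ne_zero.mpr hk0.ne'
  have hzeq : Complex.exp (2 * Real.pi * Complex.I * ((k : ℤ) : ℂ) / p) = z0 := by
    rw [hz0]
    congr 1
    have hpc : (p : ℂ) = (k : ℂ) * d := by exact_mod_cast hpdk.symm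
    push_cast
    rw [hpc]
    field_simp
  have happ := hd (k : ℤ) ⟨f, hfc, ⟨x₀, hx₀X, by rw [hfx₀]; exact one_ne_zero⟩,
    fun x hx => by rw [hzeq]; exact heig x hx⟩
  rw [hzeq, hz0] at happ
  rcases Complex.exp_eq_one_iff.mp happ with ⟨n, hn⟩
  have h2pi : (2 * (Real.pi : ℂ) * Complex.I) ≠ 0 := by
    simp [Real.pi_ne_zero, Complex.I_ne_zero]
  have h7 : (1 : ℂ) * (2 * Real.pi * Complex.I) = ((n : ℂ) * d) * (2 * Real.pi * Complex.I) := by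
    rw [one_mul]
    calc 2 * (Real.pi : ℂ) * Complex.I = (2 * Real.pi * Complex.I / d) * d :=
          (div_mul_cancel₀ _ hd0').symm
    _ = ((n : ℂ) * (2 * Real.pi * Complex.I)) * d := by rw [hn]
    _ = ((n : ℂ) * d) * (2 * Real.pi * Complex.I) := by ring
  have h8 : (1 : ℂ) = (n : ℂ) * d := mul_right_cancel₀ h2pi h7
  have h9 : (1 : ℤ) = n * d := by exact_mod_cast h8
  have h10 : (d : ℤ) ≤ 1 := Int.le_of_dvd one_pos ⟨n, by linarith⟩
  omega

end Part3
section Part1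

variable {A A' : Type*} [Fintype A] [TopologicalSpace A] [DiscreteTopology A]
  [MeasurableSpace A] [BorelSpace A]
  [Fintype A'] [TopologicalSpace A'] [DiscreteTopology A'] [MeasurableSpace A']
  [BorelSpace A']

/-- recoding homeomorphism -/
def prodHomeo : ((ℤ → A) × (ℤ → A')) ≃ₜ (ℤ → A × A') where
  toFun z := fun n => (z.1 n, z.2 n)
  invFun w := (fun n => (w n).1, fun n => (w n).2)
  left_inv z := rfl
  right_inv w := by funext n; exact rfl
  continuous_toFun := continuous_pi fun n =>
    (((continuous_apply n).comp continuous_fst).prodMk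
      ((continuous_apply n).comp continuous_snd))
  continuous_invFun :=
    (continuous_pi fun n => continuous_fst.comp (continuous_apply n)).prodMk
      (continuous_pi fun n => continuous_snd.comp (continuous_apply n))

lemma prodHomeo_comm (z : (ℤ → A) × (ℤ → A')) :
    (prodHomeo : _ ≃ₜ _) (prodShift z) = shiftMap ((prodHomeo : _ ≃ₜ _) z) := rfl

lemma prodHomeo_image (X : Set (ℤ → A)) (X' : Set (ℤ → A')) :
    (prodHomeo : _ ≃ₜ _) '' (X ×ˢ X') = prodRecode X X' := by
  ext w
  constructor
  · rintro ⟨⟨x, z⟩, ⟨hx, hz⟩, rfl⟩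
    exact ⟨hx, hz⟩
  · rintro ⟨h1, h2⟩
    exact ⟨(fun n => (w n).1, fun n => (w n).2), ⟨h1, h2⟩, by funext n; exact rfl⟩

lemma minimalOn_prodRecode_iff (X : Set (ℤ → A)) (X' : Set (ℤ → A')) :
    MinimalOn prodShift (X ×ˢ X') ↔ MinimalOn shiftMap (prodRecode X X') := by
  rw [minimalOn_conj_iff (prodHomeo) prodShift shiftMap prodHomeo_comm, prodHomeo_image]

lemma isClosed_cylSet {B : Type*} [TopologicalSpace B] [DiscreteTopology B]
    (n : ℕ) (u : Fin n → B) : IsClosed (cylSet n u) := by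
  have : cylSet n u = ⋂ i : Fin n, (fun x : ℤ → B => x ((i : ℕ) : ℤ)) ⁻¹' {u i} := by
    ext x; simp [cylSet]
  rw [this]
  exact isClosed_iInter fun i => IsClosed.preimage (continuous_apply _) isClosed_singleton

lemma measurableSet_cylSet {B : Type*} [TopologicalSpace B] [DiscreteTopology B] [Fintype B]
    [MeasurableSpace B] [BorelSpace B] (n : ℕ) (u : Fin n → B) :
    MeasurableSet (cylSet n u) := (isClosed_cylSet n u).measurableSet

lemma prodHomeo_preimage_cylSet (n : ℕ) (w : Fin n → A × A') :
    (prodHomeo : ((ℤ → A) × (ℤ → A')) ≃ₜ (ℤ → A × A')) ⁻¹' (cylSet n w) =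
      (cylSet n (fun i => (w i).1)) ×ˢ (cylSet n (fun i => (w i).2)) := by
  ext ⟨x, z⟩
  simp only [Set.mem_preimage, cylSet, Set.mem_setOf_eq, Set.mem_prod, Prod.ext_iff]
  constructor
  · intro h
    exact ⟨fun i => (h i).1, fun i => (h i).2⟩
  · intro h i
    exact ⟨h.1 i, h.2 i⟩

lemma wordsIn_fst {X : Set (ℤ → A)} {X' : Set (ℤ → A')} {n : ℕ} {w : Fin n → A × A'}
    (h : w ∈ wordsIn (prodRecode X X') n) : (fun i => (w i).1) ∈ wordsIn X n := by
  rcases h with ⟨x, ⟨hx1, _⟩, m, hm⟩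
  exact ⟨_, hx1, m, fun i => by simp only []; rw [hm i]⟩

lemma wordsIn_snd {X : Set (ℤ → A)} {X' : Set (ℤ → A')} {n : ℕ} {w : Fin n → A × A'}
    (h : w ∈ wordsIn (prodRecode X X') n) : (fun i => (w i).2) ∈ wordsIn X' n := by
  rcases h with ⟨x, ⟨_, hx2⟩, m, hm⟩
  exact ⟨_, hx2, m, fun i => by simp only []; rw [hm i]⟩

/-- the ENNReal limsup inequality we need -/
lemma le_limsup_const_mul {a : ℝ≥0∞} {u : ℕ → ℝ≥0∞} :
    a * Filter.limsup u Filter.atTop ≤ Filter.limsup (fun n => a * u n) Filter.atTop := by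
  rw [limsup_eq_iInf_iSup_of_nat, limsup_eq_iInf_iSup_of_nat]
  refine le_iInf fun n => ?_
  refine le_trans (mul_le_mul_right (iInf_le _ n) a) ?_
  rw [ENNReal.mul_iSup]
  exact iSup_mono fun i => by rw [ENNReal.mul_iSup]

end Part1
section Part1b

variable {A A' : Type*} [Fintype A] [TopologicalSpace A] [DiscreteTopology A]
  [MeasurableSpace A] [BorelSpace A]
  [Fintype A'] [TopologicalSpace A'] [DiscreteTopology A'] [MeasurableSpace A']
  [BorelSpace A']
  {X : Set (ℤ → A)} {p : ℕ} {y : ℤ → A'} {X' : Set (ℤ → A')}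

local notation "EH" => (prodHomeo : ((ℤ → A) × (ℤ → A')) ≃ₜ (ℤ → A × A'))

lemma part_a_to_b (X : Set (ℤ → A)) (X' : Set (ℤ → A'))
    (ha : IsBoshernitzan (prodRecode X X')) : MinimalOn prodShift (X ×ˢ X') :=
  (minimalOn_prodRecode_iff X X').mpr ha.2.1

lemma part_b_to_a (hX : IsBoshernitzan X) (hp : 0 < p)
    (hyper : ∀ n : ℤ, y (n + (p : ℤ)) = y n)
    (hX' : X' = {z | ∃ j : ℤ, ∀ n : ℤ, z n = y (n + j)})
    (hb : MinimalOn prodShift (X ×ˢ X')) : IsBoshernitzan (prodRecode X X') := by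
  obtain ⟨⟨hXne, hXcl, hXs⟩, hXmin, μ, hμprob, hμX, hμinv, hμlim⟩ := hX
  have hX'ne : X'.Nonempty := ⟨ytr y 0, (mem_X'_iff hX').mpr ⟨0, rfl⟩⟩
  have hX'cl : IsClosed X' := isClosed_X' hp hyper hX'
  have hX's : shiftMap '' X' = X' := shiftMap_image_X' hX'
  have hprodclosed : IsClosed (prodRecode X X') := by
    rw [← prodHomeo_image X X']
    exact (((hXcl.prod hX'cl).isCompact).image (Homeomorph.continuous EH)).isClosed
  have hprodinv : shiftMap '' prodRecode X X' = prodRecode X X' := by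
    rw [← prodHomeo_image X X']
    have h1 : shiftMap '' (EH '' (X ×ˢ X')) = EH '' (prodShift '' (X ×ˢ X')) := by
      rw [Set.image_image, Set.image_image]
      simp_rw [prodHomeo_comm]
    rw [h1, prodShift_image_prod, hXs, hX's]
  refine ⟨⟨?_, hprodclosed, hprodinv⟩, (minimalOn_prodRecode_iff X X').mp hb, ?_⟩
  · rcases hXne with ⟨x, hx⟩
    rcases hX'ne with ⟨z, hz⟩
    exact ⟨EH (x, z), (prodHomeo_image X X') ▸ Set.mem_image_of_mem _ (Set.mk_mem_prod hx hz)⟩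
  -- the measure
  have hplow : ((p : ℝ≥0∞))⁻¹ ≠ 0 := ENNReal.inv_ne_zero.mpr (ENNReal.natCast_ne_top p)
  have hpE0 : (p : ℝ≥0∞) ≠ 0 := Nat.cast_ne_zero.mpr hp.ne'
  set ν : Measure (ℤ → A') :=
    ((p : ℝ≥0∞))⁻¹ • ∑ j ∈ Finset.range p, Measure.dirac (ytr y (j : ℤ)) with hν
  have hν_apply : ∀ s : Set (ℤ → A'), MeasurableSet s →
      ν s = ((p : ℝ≥0∞))⁻¹ * ∑ j ∈ Finset.range p, s.indicator 1 (ytr y (j : ℤ)) := by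
    intro s hs
    rw [hν, Measure.smul_apply, Measure.finset_sum_apply, smul_eq_mul]
    congr 1
    exact Finset.sum_congr rfl fun j _ => Measure.dirac_apply' _ hs
  haveI hνprob : IsProbabilityMeasure ν := by
    constructor
    rw [hν_apply _ MeasurableSet.univ]
    simp only [Set.indicator_univ, Pi.one_apply, Finset.sum_const, Finset.card_range,
      nsmul_eq_mul, mul_one]
    exact ENNReal.inv_mul_cancel hpE0 (ENNReal.natCast_ne_top p)
  have hSmeas : Measurable (shiftMap (A := A')) := continuous_shiftMap.measurable
  have hSmeasA : Measurable (shiftMap (A := A)) := continuous_shiftMap.measurable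
  have hνinv : Measure.map shiftMap ν = ν := by
    apply Measure.ext
    intro s hs
    rw [Measure.map_apply hSmeas hs, hν_apply _ (hs.preimage hSmeas), hν_apply _ hs]
    congr 1
    set g : ℕ → ℝ≥0∞ := fun j => s.indicator 1 (ytr y (j : ℤ)) with hg
    have hgtop : g 0 ≠ ⊤ := by
      have hle : g 0 ≤ 1 := Set.indicator_apply_le (fun _ => le_refl _)
      exact (hle.trans_lt ENNReal.one_lt_top).ne
    have hpg : g p = g 0 := by
      rw [hg]
      simp only
      congr 1
      apply ytr_eq_of_mod hyper
      exact ⟨-1, by push_cast; ring⟩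
    have hstep : ∀ j : ℕ, (shiftMap ⁻¹' s).indicator 1 (ytr y (j : ℤ)) = g (j + 1) := by
      intro j
      have hmemiff : ytr y (j : ℤ) ∈ shiftMap ⁻¹' s ↔ ytr y ((j : ℤ) + 1) ∈ s := by
        rw [Set.mem_preimage, shiftMap_ytr]
      have hcast : (((j + 1 : ℕ)) : ℤ) = (j : ℤ) + 1 := by push_cast; ring
      rw [hg]
      simp only [hcast]
      by_cases hmem : ytr y ((j : ℤ) + 1) ∈ s
      · rw [Set.indicator_of_mem (hmemiff.mpr hmem), Set.indicator_of_mem hmem]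
        rfl
      · rw [Set.indicator_of_notMem (fun hc => hmem (hmemiff.mp hc)),
          Set.indicator_of_notMem hmem]
    calc ∑ j ∈ Finset.range p, (shiftMap ⁻¹' s).indicator 1 (ytr y (j : ℤ))
        = ∑ j ∈ Finset.range p, g (j + 1) := Finset.sum_congr rfl fun j _ => hstep j
      _ = ∑ j ∈ Finset.range p, g j := by
          have h1 := Finset.sum_range_succ' g p
          have h2 := Finset.sum_range_succ g p
          rw [h2, hpg] at h1
          exact ((ENNReal.add_left_inj hgtop).mp h1.symm)
  have hνX' : ν X' = 1 := by
    rw [hν_apply _ hX'cl.measurableSet]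
    have h1 : ∀ j ∈ Finset.range p, X'.indicator (1 : (ℤ → A') → ℝ≥0∞) (ytr y (j : ℤ)) = 1 := by
      intro j _
      rw [Set.indicator_of_mem ((mem_X'_iff hX').mpr ⟨j, rfl⟩)]
      rfl
    rw [Finset.sum_congr rfl h1]
    simp only [Finset.sum_const, Finset.card_range, nsmul_eq_mul, mul_one]
    exact ENNReal.inv_mul_cancel hpE0 (ENNReal.natCast_ne_top p)
  -- lower bound for cylinders of X'
  have hνcyl : ∀ n : ℕ, ∀ v ∈ wordsIn X' n, ((p : ℝ≥0∞))⁻¹ ≤ ν (cylSet n v) := by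
    intro n v hv
    rcases hv with ⟨z, hzX', m, hzv⟩
    rcases (mem_X'_iff hX').mp hzX' with ⟨j, rfl⟩
    set j₀ : ℕ := ((m + j) % p).toNat with hj₀
    have hj₀nonneg : 0 ≤ (m + j) % (p : ℤ) := Int.emod_nonneg _ (by positivity)
    have hj₀lt : j₀ < p := by
      have := Int.emod_lt_of_pos (m + j) (show (0:ℤ) < p by exact_mod_cast hp)
      omega
    have hytr : ytr y (j₀ : ℤ) = ytr y (m + j) := by
      apply ytr_eq_of_mod hyper
      have h1 : ((j₀ : ℤ)) = (m + j) % p := by omega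
      have h2 := Int.mul_ediv_add_emod (m + j) (p : ℤ)
      exact ⟨(m + j) / p, by rw [h1]; linarith⟩
    have hmem : ytr y (j₀ : ℤ) ∈ cylSet n v := by
      intro i
      rw [hytr]
      have h3 := hzv i
      calc (ytr y (m + j)) ((i : ℕ) : ℤ) = y (((i : ℕ) : ℤ) + (m + j)) := rfl
        _ = (ytr y j) (m + (i : ℕ)) := by
            show y _ = y _
            congr 1
            ring
        _ = v i := h3
    rw [hν_apply _ (measurableSet_cylSet n v)]
    calc ((p : ℝ≥0∞))⁻¹ = ((p : ℝ≥0∞))⁻¹ * (cylSet n v).indicator 1 (ytr y (j₀ : ℤ)) := by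
          rw [Set.indicator_of_mem hmem]
          simp
      _ ≤ _ := by
          apply mul_le_mul_right
          exact Finset.single_le_sum (f := fun j : ℕ => (cylSet n v).indicator
            (1 : (ℤ → A') → ℝ≥0∞) (ytr y (j : ℤ))) (fun i _ => zero_le')
            (Finset.mem_range.mpr hj₀lt)
  -- the product measure pushed forward
  have hEmeas : Measurable (⇑EH) := (Homeomorph.continuous EH).measurable
  set κ : Measure (ℤ → A × A') := Measure.map (⇑EH) (μ.prod ν) with hκ
  haveI : IsProbabilityMeasure (μ.prod ν) := by infer_instance
  haveI hκprob : IsProbabilityMeasure κ := Measure.isProbabilityMeasure_map hEmeas.aemeasurable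
  have hEpre : (⇑EH) ⁻¹' (prodRecode X X') = X ×ˢ X' := by
    rw [← prodHomeo_image X X', Set.preimage_image_eq _ (Homeomorph.injective EH)]
  have hκY : κ (prodRecode X X') = 1 := by
    rw [hκ, Measure.map_apply hEmeas hprodclosed.measurableSet, hEpre,
      Measure.prod_prod, hμX, hνX', mul_one]
  have hκinv : Measure.map shiftMap κ = κ := by
    rw [hκ, Measure.map_map continuous_shiftMap.measurable hEmeas]
    have hcomp : (shiftMap (A := A × A')) ∘ ⇑EH = ⇑EH ∘ Prod.map shiftMap shiftMap :=
      funext fun z => (prodHomeo_comm z).symm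
    rw [hcomp, ← Measure.map_map hEmeas (hSmeasA.prodMap hSmeas),
      ← Measure.map_prod_map _ _ hSmeasA hSmeas, hμinv, hνinv]
  refine ⟨κ, hκprob, hκY, hκinv, ?_⟩
  -- the limsup estimate
  have hκcyl : ∀ n : ℕ, ∀ w ∈ wordsIn (prodRecode X X') n,
      ((p : ℝ≥0∞))⁻¹ * muLow μ X n ≤ κ (cylSet n w) := by
    intro n w hw
    rw [hκ, Measure.map_apply hEmeas (measurableSet_cylSet n w),
      prodHomeo_preimage_cylSet, Measure.prod_prod]
    have h1 : muLow μ X n ≤ μ (cylSet n (fun i => (w i).1)) :=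
      sInf_le (Set.mem_image_of_mem _ (wordsIn_fst hw))
    have h2 : ((p : ℝ≥0∞))⁻¹ ≤ ν (cylSet n (fun i => (w i).2)) :=
      hνcyl n _ (wordsIn_snd hw)
    calc ((p : ℝ≥0∞))⁻¹ * muLow μ X n = muLow μ X n * ((p : ℝ≥0∞))⁻¹ := mul_comm _ _
      _ ≤ _ := mul_le_mul' h1 h2
  have hmuLow : ∀ n : ℕ, ((p : ℝ≥0∞))⁻¹ * muLow μ X n ≤ muLow κ (prodRecode X X') n := by
    intro n
    apply le_sInf
    rintro b ⟨w, hw, rfl⟩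
    exact hκcyl n w hw
  have hchain : ∀ n : ℕ, ((p : ℝ≥0∞))⁻¹ * ((n : ℝ≥0∞) * muLow μ X n) ≤
      (n : ℝ≥0∞) * muLow κ (prodRecode X X') n := by
    intro n
    rw [mul_left_comm]
    exact mul_le_mul_right (hmuLow n) _
  have hlim1 : ((p : ℝ≥0∞))⁻¹ * Filter.limsup (fun n : ℕ => (n : ℝ≥0∞) * muLow μ X n)
      Filter.atTop ≤ Filter.limsup (fun n : ℕ => (n : ℝ≥0∞) *
        muLow κ (prodRecode X X') n) Filter.atTop := by
    refine le_trans le_limsup_const_mul ?_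
    exact Filter.limsup_le_limsup (Filter.Eventually.of_forall hchain)
  refine lt_of_lt_of_le ?_ hlim1
  exact ENNReal.mul_pos hplow hμlim.ne'

end Part1b
/-- Let `X` be a Boshernitzan subshift and `X'` a `p`-periodic
subshift (the translates of a sequence `y` of least period `p`). The following are
equivalent: (a) the recoded product subshift satisfies the Boshernitzan condition;
(b) `(X × X', T)` is minimal; (c) `(X, S^p)` is minimal; (d) the only topological
eigenvalue of `(X,S)` among `{e^{2πik/p} : k ∈ ℤ}` is the trivial eigenvalue `1`. -/
theorem product_boshernitzan_characterization
    {A A' : Type*} [Fintype A] [TopologicalSpace A] [DiscreteTopology A]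
    [MeasurableSpace A] [BorelSpace A]
    [Fintype A'] [TopologicalSpace A'] [DiscreteTopology A'] [MeasurableSpace A']
    [BorelSpace A']
    (X : Set (ℤ → A)) (hX : IsBoshernitzan X)
    (p : ℕ) (hp : 0 < p) (y : ℤ → A')
    (hyper : ∀ n : ℤ, y (n + (p : ℤ)) = y n)
    (hleast : ∀ q : ℕ, 0 < q → (∀ n : ℤ, y (n + (q : ℤ)) = y n) → p ≤ q)
    (X' : Set (ℤ → A')) (hX' : X' = {z | ∃ j : ℤ, ∀ n : ℤ, z n = y (n + j)}) :
    (IsBoshernitzan (prodRecode X X') ↔ MinimalOn prodShift (X ×ˢ X')) ∧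
      (MinimalOn prodShift (X ×ˢ X') ↔ MinimalOn (shiftMap^[p]) X) ∧
      (MinimalOn (shiftMap^[p]) X ↔
        ∀ k : ℤ,
          TopEigenvalueOn shiftMap X (Complex.exp (2 * Real.pi * Complex.I * k / p)) →
            Complex.exp (2 * Real.pi * Complex.I * k / p) = 1) := by
  obtain ⟨⟨hXne, hXcl, hXs⟩, hXmin, _⟩ := id hX
  refine ⟨⟨part_a_to_b X X', part_b_to_a hX hp hyper hX'⟩,
    ⟨part_b_to_c hp hyper hleast hX' hXs hXcl, part_c_to_b hp hyper hX'⟩,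
    ⟨part_c_to_d hp hXs hXcl, part_d_to_c hp hXs hXcl hXne hXmin⟩⟩
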